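/- arXiv:1604.07359 — 11 statements merged into one kernel-verified Lean document; each statement's English description precedes it below -/
import Mathlib

section
/- Let X be a δ-hyperbolic geodesic metric space, S ⊆ X a compact set, and r ∈ ℝ. Suppose u, v ∈ S are locally diametrical in S (u is at maximum distance from v among points of S and vice versa), and let [u,v] be a geodesic from u to v with c the point at distance r from u along it (assuming r ≤ d(u,v)). Then every point of S within distance 2r of u is within distance r + δ of c, i.e. B_{2r}(u) ∩ S ⊆ B_{r+δ}(c) ∩ S. -/
/-- A geodesic from `x` to `y`, parametrized by arc length on `[0, dist x y]`. -/
def IsGeodesicFrom {X : Type*} [MetricSpace X] (γ : ℝ → X) (x y : X) : Prop :=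
  γ 0 = x ∧ γ (dist x y) = y ∧
    ∀ s ∈ Set.Icc (0 : ℝ) (dist x y), ∀ t ∈ Set.Icc (0 : ℝ) (dist x y),
      dist (γ s) (γ t) = |s - t|

/-- A geodesic metric space: every pair of points is joined by a geodesic. -/
def GeodesicMS (X : Type*) [MetricSpace X] : Prop :=
  ∀ x y : X, ∃ γ : ℝ → X, IsGeodesicFrom γ x y

/-- Thin-triangle (insize) δ-hyperbolicity: in every geodesic triangle, points at equal
parameter (up to the internal distance) on the two sides from a common vertex are within δ. -/
def ThinTriangles (X : Type*) [MetricSpace X] (δ : ℝ) : Prop :=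
  ∀ (x y z : X) (f g h : ℝ → X),
    IsGeodesicFrom f x y → IsGeodesicFrom g x z → IsGeodesicFrom h y z →
    (∀ t ∈ Set.Icc (0 : ℝ) ((dist x y + dist x z - dist y z) / 2),
        dist (f t) (g t) ≤ δ) ∧
    (∀ t ∈ Set.Icc (0 : ℝ) ((dist x y + dist y z - dist x z) / 2),
        dist (f (dist x y - t)) (h t) ≤ δ) ∧
    (∀ t ∈ Set.Icc (0 : ℝ) ((dist x z + dist y z - dist x y) / 2),
        dist (g (dist x z - t)) (h (dist y z - t)) ≤ δ)

/-- Chepoi–Estellon lemma with locally diametrical pairs: if `u, v` are locally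
diametrical in a compact `S` and `c` is the point at distance `r` from `u` on a
geodesic `[u,v]`, then `B_{2r}(u) ∩ S ⊆ B_{r+δ}(c) ∩ S`. -/
theorem ball_subset_of_locally_diametrical {X : Type*} [MetricSpace X] {δ r : ℝ}
    (hδ : 0 ≤ δ) (hgeo : GeodesicMS X) (hthin : ThinTriangles X δ)
    (S : Set X) (hS : IsCompact S) (u v : X) (hu : u ∈ S) (hv : v ∈ S)
    (hlocu : ∀ s ∈ S, dist u s ≤ dist u v)
    (hlocv : ∀ s ∈ S, dist v s ≤ dist v u)
    (γ : ℝ → X) (hγ : IsGeodesicFrom γ u v)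
    (hr0 : 0 ≤ r) (hr : r ≤ dist u v) :
    Metric.closedBall u (2 * r) ∩ S ⊆ Metric.closedBall (γ r) (r + δ) ∩ S := by
  rintro x ⟨hx1, hx2⟩
  refine ⟨?_, hx2⟩
  rw [Metric.mem_closedBall, dist_comm x u] at hx1
  rw [Metric.mem_closedBall, dist_comm x (γ r)]
  obtain ⟨g, hg⟩ := hgeo u x
  obtain ⟨h, hh⟩ := hgeo v x
  obtain ⟨H1, H2, H3⟩ := hthin u v x γ g h hγ hg hh
  have hux : dist v x ≤ dist u v := (hlocv x hx2).trans_eq (dist_comm v u)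
  have htri : dist u v ≤ dist u x + dist v x := by
    calc dist u v ≤ dist u x + dist x v := dist_triangle u x v
    _ = dist u x + dist v x := by rw [dist_comm x v]
  have htri2 : dist u v - dist v x ≤ dist u x := by linarith
  rcases le_or_gt r ((dist u v + dist u x - dist v x) / 2) with hcase | hcase
  · -- r ≤ Gromov product at u
    have hrux : r ≤ dist u x := by linarith
    have h1 : dist (γ r) (g r) ≤ δ := H1 r ⟨hr0, hcase⟩
    have h2 : dist (g r) x = dist u x - r := by
      have := hg.2.2 r ⟨hr0, hrux⟩ (dist u x) ⟨dist_nonneg, le_refl _⟩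
      rw [hg.2.1] at this
      rw [this, abs_of_nonpos (by linarith)]; ring
    calc dist (γ r) x ≤ dist (γ r) (g r) + dist (g r) x := dist_triangle _ _ _
      _ ≤ δ + (dist u x - r) := by rw [h2]; linarith
      _ ≤ r + δ := by linarith
  · -- r > Gromov product at u; use the side from v
    set t := dist u v - r with ht
    have ht0 : 0 ≤ t := by simp [ht]; linarith
    have htle : t ≤ (dist u v + dist v x - dist u x) / 2 := by
      simp only [ht]; linarith
    have htvx : t ≤ dist v x := by simp only [ht]; linarith
    have h1 : dist (γ (dist u v - t)) (h t) ≤ δ := H2 t ⟨ht0, htle⟩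
    have hrt : dist u v - t = r := by simp [ht]
    rw [hrt] at h1
    have h2 : dist (h t) x = dist v x - t := by
      have := hh.2.2 t ⟨ht0, htvx⟩ (dist v x) ⟨dist_nonneg, le_refl _⟩
      rw [hh.2.1] at this
      rw [this, abs_of_nonpos (by linarith)]; ring
    calc dist (γ r) x ≤ dist (γ r) (h t) + dist (h t) x := dist_triangle _ _ _
      _ ≤ δ + (dist v x - t) := by rw [h2]; linarith
      _ ≤ r + δ := by simp only [ht]; linarith
end

section
/- Let G be a δ-hyperbolic graph and S ⊆ V(G) finite. Define a sequence by choosing u ∈ S arbitrarily, v₁ ∈ F_S(u), and iteratively v_{k+1} ∈ F_S(v_k). Then the sequence of distances d(v_k, v_{k+1}) is nondecreasing and stabilizes after at most 2δ steps beyond the first; consequently a locally diametrical pair of vertices of S can be found with at most 2δ + 1 breadth-first searches. -/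
/-- Iteratively taking farthest points in a finite vertex set `S` of a δ-hyperbolic
graph (unit edges, so distances between vertices are integers) yields a nondecreasing
sequence of distances that stabilizes after at most `2δ` steps beyond the first,
producing a locally diametrical pair within `2δ + 1` farthest-point (BFS) computations. -/
theorem locally_diametrical_in_few_bfs {X : Type*} [MetricSpace X] {δ : ℝ}
    (hgeo : GeodesicMS X) (hthin : ThinTriangles X δ)
    (S : Finset X) (hS : S.Nonempty)
    (hint : ∀ a ∈ S, ∀ b ∈ S, ∃ n : ℕ, dist a b = n)
    (v : ℕ → X) (hv0 : v 0 ∈ S)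
    (hF : ∀ k : ℕ, v (k + 1) ∈ S ∧ ∀ s ∈ S, dist (v k) s ≤ dist (v k) (v (k + 1))) :
    (∀ k : ℕ, dist (v k) (v (k + 1)) ≤ dist (v (k + 1)) (v (k + 2))) ∧
    ∃ k : ℕ, 1 ≤ k ∧ (k : ℝ) ≤ 2 * δ + 1 ∧
      (∀ s ∈ S, dist (v k) s ≤ dist (v k) (v (k + 1))) ∧
      (∀ s ∈ S, dist (v (k + 1)) s ≤ dist (v (k + 1)) (v k)) := by
  obtain ⟨a, haS⟩ := hS
  -- δ ≥ 0
  have hδ0 : 0 ≤ δ := by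
    obtain ⟨γ, hγ⟩ := hgeo a a
    have h := (hthin a a a γ γ γ hγ hγ hγ).1 0
      (by constructor <;> simp [dist_self])
    simpa using h
  -- key lemma
  have lemA : ∀ u w x y : X, dist u x ≤ dist u w → dist u y ≤ dist u w →
      dist x y ≤ max (dist w x) (dist w y) + 2 * δ := by
    intro u w x y hx hy
    obtain ⟨σ, hσ⟩ := hgeo u w
    obtain ⟨f, hf⟩ := hgeo u x
    obtain ⟨g, hg⟩ := hgeo u y
    obtain ⟨h1, hh1⟩ := hgeo x w
    obtain ⟨h2, hh2⟩ := hgeo y w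
    set α₁ := (dist u x + dist u w - dist x w) / 2 with hα₁
    set α₂ := (dist u y + dist u w - dist y w) / 2 with hα₂
    set m := min α₁ α₂ with hm
    have t1 := dist_triangle x u w
    have t2 := dist_triangle y u w
    have t3 := dist_triangle u x w
    have t4 := dist_triangle u y w
    have hcx : dist x u = dist u x := dist_comm x u
    have hcy : dist y u = dist u y := dist_comm y u
    have hα₁0 : 0 ≤ α₁ := by rw [hα₁]; linarith
    have hα₂0 : 0 ≤ α₂ := by rw [hα₂]; linarith
    have hm0 : 0 ≤ m := le_min hα₁0 hα₂0
    have hα₁x : α₁ ≤ dist u x := by rw [hα₁]; linarith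
    have hα₂y : α₂ ≤ dist u y := by rw [hα₂]; linarith
    have hα₁w : α₁ ≤ dist u w := by rw [hα₁]; linarith
    have hmx : m ≤ dist u x := le_trans (min_le_left _ _) hα₁x
    have hmy : m ≤ dist u y := le_trans (min_le_right _ _) hα₂y
    have hmw : m ≤ dist u w := le_trans (min_le_left _ _) hα₁w
    have hfσ : dist (f m) (σ m) ≤ δ :=
      (hthin u x w f σ h1 hf hσ hh1).1 m ⟨hm0, min_le_left _ _⟩
    have hgσ : dist (g m) (σ m) ≤ δ :=
      (hthin u y w g σ h2 hg hσ hh2).1 m ⟨hm0, min_le_right _ _⟩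
    have hxf : dist x (f m) = dist u x - m := by
      have := hf.2.2 (dist u x) ⟨dist_nonneg, le_refl _⟩ m ⟨hm0, hmx⟩
      rw [hf.2.1] at this
      rw [this, abs_of_nonneg (by linarith)]
    have hyg : dist (g m) y = dist u y - m := by
      have := hg.2.2 m ⟨hm0, hmy⟩ (dist u y) ⟨dist_nonneg, le_refl _⟩
      rw [hg.2.1] at this
      rw [this, abs_of_nonpos (by linarith), neg_sub]
    have chain : dist x y ≤ (dist u x - m) + δ + δ + (dist u y - m) := by
      calc dist x y ≤ dist x (f m) + dist (f m) y := dist_triangle _ _ _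
        _ ≤ dist x (f m) + (dist (f m) (σ m) + dist (σ m) y) := by
            linarith [dist_triangle (f m) (σ m) y]
        _ ≤ dist x (f m) + (dist (f m) (σ m) + (dist (σ m) (g m) + dist (g m) y)) := by
            linarith [dist_triangle (σ m) (g m) y]
        _ ≤ (dist u x - m) + δ + δ + (dist u y - m) := by
            rw [hxf, hyg, dist_comm (σ m) (g m)]; linarith
    rcases min_le_iff.mp (le_refl m) with _ | _
    all_goals rcases le_total α₁ α₂ with hcase | hcase
    · have hmeq : m = α₁ := min_eq_left hcase
      have : dist x y ≤ dist w x + 2 * δ := by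
        rw [dist_comm w x]; rw [hmeq, hα₁] at chain; linarith
      exact le_trans this (by have := le_max_left (dist w x) (dist w y); linarith)
    · have hmeq : m = α₂ := min_eq_right hcase
      have : dist x y ≤ dist w y + 2 * δ := by
        rw [dist_comm w y]; rw [hmeq, hα₂] at chain; linarith
      exact le_trans this (by have := le_max_right (dist w x) (dist w y); linarith)
    · have hmeq : m = α₁ := min_eq_left hcase
      have : dist x y ≤ dist w x + 2 * δ := by
        rw [dist_comm w x]; rw [hmeq, hα₁] at chain; linarith
      exact le_trans this (by have := le_max_left (dist w x) (dist w y); linarith)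
    · have hmeq : m = α₂ := min_eq_right hcase
      have : dist x y ≤ dist w y + 2 * δ := by
        rw [dist_comm w y]; rw [hmeq, hα₂] at chain; linarith
      exact le_trans this (by have := le_max_right (dist w x) (dist w y); linarith)
  -- membership
  have vS : ∀ k : ℕ, v k ∈ S := by
    intro k
    cases k with
    | zero => exact hv0
    | succ n => exact (hF n).1
  -- monotonicity
  have mono : ∀ k : ℕ, dist (v k) (v (k + 1)) ≤ dist (v (k + 1)) (v (k + 2)) := by
    intro k
    have := (hF (k + 1)).2 (v k) (vS k)
    rwa [dist_comm] at this
  refine ⟨mono, ?_⟩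
  -- diameter bound
  have hbound : ∀ x ∈ S, ∀ y ∈ S, dist x y ≤ dist (v 1) (v 2) + 2 * δ := by
    intro x hx y hy
    have h := lemA (v 0) (v 1) x y ((hF 0).2 x hx) ((hF 0).2 y hy)
    have h1 := (hF 1).2 x hx
    have h2 := (hF 1).2 y hy
    have : max (dist (v 1) x) (dist (v 1) y) ≤ dist (v 1) (v 2) := max_le h1 h2
    linarith
  set N := Nat.floor (2 * δ) + 1 with hN
  have hNle : (N : ℝ) ≤ 2 * δ + 1 := by
    rw [hN]; push_cast
    linarith [Nat.floor_le (show (0:ℝ) ≤ 2 * δ by linarith)]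
  have hNgt : 2 * δ < (N : ℝ) := by
    rw [hN]; push_cast
    exact_mod_cast Nat.lt_floor_add_one (2 * δ)
  have key : ∃ k : ℕ, 1 ≤ k ∧ k ≤ N ∧
      dist (v (k + 1)) (v (k + 2)) ≤ dist (v k) (v (k + 1)) := by
    by_contra hc
    push_neg at hc
    have grow : ∀ j : ℕ, j ≤ N →
        dist (v 1) (v 2) + (j : ℝ) ≤ dist (v (j + 1)) (v (j + 2)) := by
      intro j
      induction j with
      | zero => intro _; simp
      | succ n ih =>
        intro hn
        have h1 := ih (Nat.le_of_succ_le hn)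
        have hlt := hc (n + 1) (Nat.succ_le_succ (Nat.zero_le n)) hn
        obtain ⟨p, hp⟩ := hint _ (vS (n + 1)) _ (vS (n + 2))
        obtain ⟨q, hq⟩ := hint _ (vS (n + 2)) _ (vS (n + 3))
        rw [hp, hq] at hlt
        have hpq : (p : ℝ) < q := hlt
        have : p < q := by exact_mod_cast hpq
        have hstep : (p : ℝ) + 1 ≤ q := by exact_mod_cast this
        have : dist (v (n + 2)) (v (n + 3)) = (q : ℝ) := hq
        rw [show n + 1 + 1 = n + 2 from rfl, show n + 1 + 2 = n + 3 from rfl, hq]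
        rw [hp] at h1
        push_cast
        linarith
    have hG := grow N le_rfl
    have hb := hbound _ (vS (N + 1)) _ (vS (N + 2))
    linarith
  obtain ⟨k, hk1, hkN, hkd⟩ := key
  refine ⟨k, hk1, ?_, (hF k).2, ?_⟩
  · have : (k : ℝ) ≤ N := by exact_mod_cast hkN
    linarith
  · intro s hs
    calc dist (v (k + 1)) s ≤ dist (v (k + 1)) (v (k + 2)) := (hF (k + 1)).2 s hs
      _ ≤ dist (v k) (v (k + 1)) := hkd
      _ = dist (v (k + 1)) (v k) := dist_comm _ _
end

section
/- Let X be a δ-hyperbolic geodesic metric space and let x, y be a locally diametrical pair in a finite set S ⊆ X. Let c be the midpoint of a geodesic [x,y] and λ = d(x,y)/2. Then every point z ∈ S satisfies d(z,c) ≤ λ + δ. -/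
/-! Whichever of `x`, `y` is farther from `z`, the midpoint `c` lies within the part of
`[x, y]` that fellow-travels the side of the triangle `x y z` through that vertex; so `c` is
δ-close to a point on that side at distance `dist x z - λ` (resp. `dist y z - λ`) from `z`,
and local diametricity bounds that by `λ`. -/

section

variable {X : Type*} [MetricSpace X]

theorem IsGeodesicFrom.dist_apply_right {γ : ℝ → X} {x y : X} (hγ : IsGeodesicFrom γ x y)
    {t : ℝ} (ht₀ : 0 ≤ t) (ht : t ≤ dist x y) : dist (γ t) y = dist x y - t := by
  have h := hγ.2.2 t ⟨ht₀, ht⟩ (dist x y) ⟨dist_nonneg, le_rfl⟩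
  rw [hγ.2.1, abs_of_nonpos (by linarith)] at h
  linarith

variable {δ : ℝ}

theorem ThinTriangles.dist_apply_le_of_le_left (hgeo : GeodesicMS X)
    (hthin : ThinTriangles X δ) {f : ℝ → X} {x y : X} (hf : IsGeodesicFrom f x y) (z : X)
    {t : ℝ} (ht₀ : 0 ≤ t) (ht : t ≤ (dist x y + dist x z - dist y z) / 2) :
    dist z (f t) ≤ dist x z - t + δ := by
  obtain ⟨g, hg⟩ := hgeo x z
  obtain ⟨h, hh⟩ := hgeo y z
  have hfg : dist (f t) (g t) ≤ δ := (hthin x y z f g h hf hg hh).1 t ⟨ht₀, ht⟩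
  have htz : t ≤ dist x z := by linarith [dist_triangle_right x y z]
  calc dist z (f t) ≤ dist (g t) z + dist (f t) (g t) :=
        dist_comm (g t) (f t) ▸ dist_triangle_left _ _ _
    _ ≤ dist x z - t + δ := by rw [hg.dist_apply_right ht₀ htz]; linarith

theorem ThinTriangles.dist_apply_le_of_le_right (hgeo : GeodesicMS X)
    (hthin : ThinTriangles X δ) {f : ℝ → X} {x y : X} (hf : IsGeodesicFrom f x y) (z : X)
    {t : ℝ} (ht₀ : 0 ≤ t) (ht : t ≤ (dist x y + dist y z - dist x z) / 2) :
    dist z (f (dist x y - t)) ≤ dist y z - t + δ := by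
  obtain ⟨g, hg⟩ := hgeo x z
  obtain ⟨h, hh⟩ := hgeo y z
  have hfh : dist (f (dist x y - t)) (h t) ≤ δ :=
    (hthin x y z f g h hf hg hh).2.1 t ⟨ht₀, ht⟩
  have htz : t ≤ dist y z := by linarith [dist_triangle x z y, dist_comm z y]
  calc dist z (f (dist x y - t)) ≤ dist (h t) z + dist (f (dist x y - t)) (h t) :=
        dist_comm (h t) (f (dist x y - t)) ▸ dist_triangle_left _ _ _
    _ ≤ dist y z - t + δ := by rw [hh.dist_apply_right ht₀ htz]; linarith

end

theorem midpoint_dominates_general {X : Type*} [MetricSpace X] {δ : ℝ}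
    (hgeo : GeodesicMS X) (hthin : ThinTriangles X δ)
    (S : Finset X) (x y : X)
    (hlocx : ∀ z ∈ S, dist x z ≤ dist x y)
    (hlocy : ∀ z ∈ S, dist y z ≤ dist y x)
    (γ : ℝ → X) (hγ : IsGeodesicFrom γ x y) :
    ∀ z ∈ S, dist z (γ (dist x y / 2)) ≤ dist x y / 2 + δ := by
  intro z hz
  have hxz := hlocx z hz
  have hyz : dist y z ≤ dist x y := dist_comm y x ▸ hlocy z hz
  have hm₀ : 0 ≤ dist x y / 2 := by positivity
  rcases le_total (dist y z) (dist x z) with hle | hle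
  · have := hthin.dist_apply_le_of_le_left hgeo hγ z hm₀ (by linarith)
    linarith
  · have := hthin.dist_apply_le_of_le_right hgeo hγ z hm₀ (by linarith)
    rw [show dist x y - dist x y / 2 = dist x y / 2 by ring] at this
    linarith

/-- If `x, y` is a locally diametrical pair of a finite set `S` in a δ-hyperbolic
geodesic space and `c` is the midpoint of a geodesic `[x,y]`, then every `z ∈ S`
satisfies `dist z c ≤ dist x y / 2 + δ`. -/
theorem midpoint_dominates {X : Type*} [MetricSpace X] {δ : ℝ}
    (hgeo : GeodesicMS X) (hthin : ThinTriangles X δ)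
    (S : Finset X) (x y : X) (hx : x ∈ S) (hy : y ∈ S)
    (hlocx : ∀ z ∈ S, dist x z ≤ dist x y)
    (hlocy : ∀ z ∈ S, dist y z ≤ dist y x)
    (γ : ℝ → X) (hγ : IsGeodesicFrom γ x y) :
    ∀ z ∈ S, dist z (γ (dist x y / 2)) ≤ dist x y / 2 + δ :=
  midpoint_dominates_general hgeo hthin S x y hlocx hlocy γ hγ
end

section
/- Let G be a δ-hyperbolic graph with finite vertex set. Then r₁(V(G)) ≤ (1/2) d₂(V(G)) + δ, and moreover the midpoint c of a geodesic between a locally diametrical pair of vertices (λ + δ)-dominates V(G) where λ is half the distance between that pair; since λ ≤ r₁(V(G)), c is a point (r₁ + δ)-dominating V(G). -/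
def Dominates {X : Type*} [MetricSpace X] (r : ℝ) (C S : Set X) : Prop :=
  ∀ s ∈ S, ∃ c ∈ C, dist s c ≤ r

/-- The p-radius of `S`: the infimum of `r` such that some set of at most `p` points
of the ambient space r-dominates `S`. -/
noncomputable def pRadius {X : Type*} [MetricSpace X] (p : ℕ) (S : Set X) : ℝ :=
  sInf {r : ℝ | ∃ C : Finset X, C.card ≤ p ∧ Dominates r (↑C) S}

/-- The q-diameter of `S`: the supremum of `r` such that some set of at least `q`
points of `S` is an `r`-dispersion (pairwise distances at least `r`). -/
noncomputable def pDiam {X : Type*} [MetricSpace X] (q : ℕ) (S : Set X) : ℝ :=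
  sSup {r : ℝ | ∃ D : Finset X, ↑D ⊆ S ∧ q ≤ D.card ∧
    (D : Set X).Pairwise fun u v => r ≤ dist u v}

/-- 1-centre theorem: for a δ-hyperbolic graph (viewed as a geodesic metric space with
vertex set `V`), `r₁(V) ≤ d₂(V)/2 + δ`; moreover the midpoint `c` of a geodesic between
a locally diametrical pair `x, y` `(λ + δ)`-dominates `V`, where `λ = dist x y / 2 ≤ r₁(V)`,
so `c` `(r₁ + δ)`-dominates `V`. -/
theorem one_centre {X : Type*} [MetricSpace X] {δ : ℝ}
    (hgeo : GeodesicMS X) (hthin : ThinTriangles X δ)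
    (V : Finset X) (x y : X) (hx : x ∈ V) (hy : y ∈ V)
    (hlocx : ∀ z ∈ V, dist x z ≤ dist x y)
    (hlocy : ∀ z ∈ V, dist y z ≤ dist y x)
    (γ : ℝ → X) (hγ : IsGeodesicFrom γ x y) :
    pRadius 1 (↑V : Set X) ≤ (1 / 2) * pDiam 2 (↑V : Set X) + δ ∧
    Dominates (dist x y / 2 + δ) {γ (dist x y / 2)} (↑V : Set X) ∧
    dist x y / 2 ≤ pRadius 1 (↑V : Set X) ∧
    Dominates (pRadius 1 (↑V : Set X) + δ) {γ (dist x y / 2)} (↑V : Set X) := by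

  classical
  obtain ⟨hγ0, hγd, hγdist⟩ := hγ
  have hd0 : (0:ℝ) ≤ dist x y := dist_nonneg
  set m : ℝ := dist x y / 2 with hm
  have hm0 : (0:ℝ) ≤ m := by positivity
  -- Key: the midpoint (m+δ)-dominates V
  have key : ∀ v ∈ V, dist v (γ m) ≤ m + δ := by
    intro v hv
    obtain ⟨g, hg0, hgd, hgdist⟩ := hgeo x v
    obtain ⟨h, hh0, hhd, hhdist⟩ := hgeo y v
    obtain ⟨h1, h2, _⟩ := hthin x y v γ g h ⟨hγ0, hγd, hγdist⟩ ⟨hg0, hgd, hgdist⟩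
      ⟨hh0, hhd, hhdist⟩
    have hxv : dist x v ≤ dist x y := hlocx v hv
    have hyv : dist y v ≤ dist x y := by
      have := hlocy v hv; rwa [dist_comm y x] at this
    have htri1 : dist x y ≤ dist x v + dist v y := dist_triangle x v y
    have htri2 : dist x v ≤ dist x y + dist y v := dist_triangle x y v
    have htri3 : dist y v ≤ dist y x + dist x v := dist_triangle y x v
    rw [dist_comm v y] at htri1
    rw [dist_comm y x] at htri3
    by_cases hc : m ≤ (dist x y + dist x v - dist y v) / 2
    · have ht : dist (γ m) (g m) ≤ δ := h1 m ⟨hm0, hc⟩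
      have hmxv : m ≤ dist x v := by
        have : (dist x y + dist x v - dist y v) / 2 ≤ dist x v := by linarith
        linarith
      have hgm : dist (g m) (g (dist x v)) = |m - dist x v| :=
        hgdist m ⟨hm0, hmxv⟩ (dist x v) ⟨dist_nonneg, le_refl _⟩
      rw [hgd, abs_of_nonpos (by linarith)] at hgm
      have : dist v (γ m) ≤ dist v (g m) + dist (g m) (γ m) := dist_triangle _ _ _
      rw [dist_comm v (g m)] at this
      rw [dist_comm (g m) (γ m)] at this
      linarith
    · have hc2 : m ≤ (dist x y + dist y v - dist x v) / 2 := by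
        push_neg at hc; linarith
      have ht : dist (γ (dist x y - m)) (h m) ≤ δ := h2 m ⟨hm0, hc2⟩
      have hdm : dist x y - m = m := by rw [hm]; ring
      rw [hdm] at ht
      have hmyv : m ≤ dist y v := by
        have : (dist x y + dist y v - dist x v) / 2 ≤ dist y v := by linarith
        linarith
      have hhm : dist (h m) (h (dist y v)) = |m - dist y v| :=
        hhdist m ⟨hm0, hmyv⟩ (dist y v) ⟨dist_nonneg, le_refl _⟩
      rw [hhd, abs_of_nonpos (by linarith)] at hhm
      have : dist v (γ m) ≤ dist v (h m) + dist (h m) (γ m) := dist_triangle _ _ _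
      rw [dist_comm v (h m)] at this
      rw [dist_comm (h m) (γ m)] at this
      linarith
  have hdom : Dominates (m + δ) {γ m} (↑V : Set X) := by
    intro s hs
    exact ⟨γ m, rfl, key s hs⟩
  -- membership in the pRadius defining set
  have hmem : (m + δ) ∈ {r : ℝ | ∃ C : Finset X, C.card ≤ 1 ∧ Dominates r (↑C) (↑V : Set X)} := by
    refine ⟨{γ m}, by simp, ?_⟩
    intro s hs
    exact ⟨γ m, by simp, key s hs⟩
  have hbdd : BddBelow {r : ℝ | ∃ C : Finset X, C.card ≤ 1 ∧ Dominates r (↑C) (↑V : Set X)} := by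
    refine ⟨0, ?_⟩
    rintro r ⟨C, _, hC⟩
    obtain ⟨c, _, hc⟩ := hC x (by exact_mod_cast hx)
    exact le_trans dist_nonneg hc
  have hple : pRadius 1 (↑V : Set X) ≤ m + δ := csInf_le hbdd hmem
  have hpge : m ≤ pRadius 1 (↑V : Set X) := by
    apply le_csInf ⟨m + δ, hmem⟩
    rintro r ⟨C, hCcard, hC⟩
    obtain ⟨c, hcC, hc⟩ := hC x (by exact_mod_cast hx)
    obtain ⟨c', hc'C, hc'⟩ := hC y (by exact_mod_cast hy)
    have : c = c' := Finset.card_le_one.mp hCcard c hcC c' hc'C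
    subst this
    have htr : dist x y ≤ dist x c + dist c y := dist_triangle _ _ _
    have hcy : dist c y = dist y c := dist_comm _ _
    rw [hm]; linarith
  -- dist x y ≤ pDiam 2 V
  have hdiam : dist x y ≤ pDiam 2 (↑V : Set X) := by
    by_cases hxy : x = y
    · subst hxy
      simp only [dist_self]
      by_cases hne : {r : ℝ | ∃ D : Finset X, ↑D ⊆ (↑V : Set X) ∧ 2 ≤ D.card ∧
          (D : Set X).Pairwise fun u v => r ≤ dist u v}.Nonempty
      · obtain ⟨r0, D, hD1, hD2, hD3⟩ := hne
        have h0mem : (0:ℝ) ∈ {r : ℝ | ∃ D : Finset X, ↑D ⊆ (↑V : Set X) ∧ 2 ≤ D.card ∧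
            (D : Set X).Pairwise fun u v => r ≤ dist u v} :=
          ⟨D, hD1, hD2, fun u _ v _ _ => dist_nonneg⟩
        have hbd : BddAbove {r : ℝ | ∃ D : Finset X, ↑D ⊆ (↑V : Set X) ∧ 2 ≤ D.card ∧
            (D : Set X).Pairwise fun u v => r ≤ dist u v} := by
          refine ⟨2 * dist x x, ?_⟩
          rintro r ⟨E, hE1, hE2, hE3⟩
          obtain ⟨u, hu, v, hv, huv⟩ := Finset.one_lt_card.mp hE2
          have := hE3 hu hv huv
          have hxu : dist x u ≤ dist x x := hlocx u (hE1 hu)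
          have hxv : dist x v ≤ dist x x := hlocx v (hE1 hv)
          have : dist u v ≤ dist u x + dist x v := dist_triangle _ _ _
          rw [dist_comm u x] at this
          have := hE3 hu hv huv
          simp only at this
          linarith
        exact le_csSup hbd h0mem
      · rw [Set.not_nonempty_iff_eq_empty] at hne
        unfold pDiam
        rw [hne, Real.sSup_empty]
    · have hbd : BddAbove {r : ℝ | ∃ D : Finset X, ↑D ⊆ (↑V : Set X) ∧ 2 ≤ D.card ∧
          (D : Set X).Pairwise fun u v => r ≤ dist u v} := by
        refine ⟨2 * dist x y, ?_⟩
        rintro r ⟨E, hE1, hE2, hE3⟩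
        obtain ⟨u, hu, v, hv, huv⟩ := Finset.one_lt_card.mp hE2
        have hxu : dist x u ≤ dist x y := hlocx u (hE1 hu)
        have hxv : dist x v ≤ dist x y := hlocx v (hE1 hv)
        have htr : dist u v ≤ dist u x + dist x v := dist_triangle _ _ _
        rw [dist_comm u x] at htr
        have := hE3 hu hv huv
        simp only at this
        linarith
      have hmem2 : dist x y ∈ {r : ℝ | ∃ D : Finset X, ↑D ⊆ (↑V : Set X) ∧ 2 ≤ D.card ∧
          (D : Set X).Pairwise fun u v => r ≤ dist u v} := by
        refine ⟨{x, y}, ?_, ?_, ?_⟩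
        · intro z hz
          simp only [Finset.coe_insert, Finset.coe_singleton, Set.mem_insert_iff,
            Set.mem_singleton_iff] at hz
          rcases hz with rfl | rfl
          · exact hx
          · exact hy
        · rw [Finset.card_insert_of_notMem (by simpa using hxy), Finset.card_singleton]
        · intro u hu v hv huv
          simp only [Finset.coe_insert, Finset.coe_singleton, Set.mem_insert_iff,
            Set.mem_singleton_iff] at hu hv
          rcases hu with rfl | rfl <;> rcases hv with rfl | rfl
          · exact absurd rfl huv
          · exact le_refl _
          · rw [dist_comm]
          · exact absurd rfl huv
      exact le_csSup hbd hmem2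
  refine ⟨?_, hdom, hpge, ?_⟩
  · have : m ≤ (1/2) * pDiam 2 (↑V : Set X) := by rw [hm]; linarith
    linarith
  · intro s hs
    exact ⟨γ m, rfl, le_trans (key s hs) (by linarith)⟩
end

section
/- Let X be δ-hyperbolic, S finite, and x,y a locally diametrical pair of S with d(x,y) ≥ d(x,z) ≥ d(y,z) where z ∈ S maximizes min{d(z,x), d(z,y)}. Set λ = d(y,z)/2 and let c₁ = [x,y][λ] and c₂ = [y,x][λ] (points at distance λ from x and from y respectively along a geodesic [x,y]). Then every point w of S satisfies min{d(w,c₁), d(w,c₂)} ≤ λ + δ. In particular these two points (r₂(S) + δ)-dominate S. -/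
/-- 2-centre theorem: let `x, y` be a locally diametrical pair of a finite set `S`,
`z ∈ S` maximize `min (dist · x) (dist · y)`, with `dist y z ≤ dist x z ≤ dist x y`,
and set `λ = dist y z / 2`. Then the points `c₁ = [x,y][λ]` and `c₂ = [y,x][λ]` satisfy
`min (dist w c₁) (dist w c₂) ≤ λ + δ` for every `w ∈ S`; in particular they
`(r₂(S) + δ)`-dominate `S`. -/
theorem two_centre {X : Type*} [MetricSpace X] {δ : ℝ}
    (hgeo : GeodesicMS X) (hthin : ThinTriangles X δ)
    (S : Finset X) (x y z : X) (hx : x ∈ S) (hy : y ∈ S) (hz : z ∈ S)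
    (hlocx : ∀ s ∈ S, dist x s ≤ dist x y)
    (hlocy : ∀ s ∈ S, dist y s ≤ dist y x)
    (hzmax : ∀ s ∈ S, min (dist s x) (dist s y) ≤ min (dist z x) (dist z y))
    (horder1 : dist y z ≤ dist x z) (horder2 : dist x z ≤ dist x y)
    (γ : ℝ → X) (hγ : IsGeodesicFrom γ x y) :
    (∀ w ∈ S, min (dist w (γ (dist y z / 2))) (dist w (γ (dist x y - dist y z / 2)))
        ≤ dist y z / 2 + δ) ∧
    Dominates (pRadius 2 (↑S : Set X) + δ)
      {γ (dist y z / 2), γ (dist x y - dist y z / 2)} (↑S : Set X) := by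
  obtain ⟨hγ0, hγD, hγd⟩ := hγ
  set D := dist x y with hD
  set lam := dist y z / 2 with hlam
  have hlam0 : 0 ≤ lam := by positivity
  have h2D : 2 * lam ≤ D := by
    have : dist y z ≤ D := le_trans horder1 horder2
    linarith
  have hD0 : 0 ≤ D := dist_nonneg
  have hlamIcc : lam ∈ Set.Icc (0 : ℝ) D := ⟨hlam0, by linarith⟩
  have hlamIcc' : D - lam ∈ Set.Icc (0 : ℝ) D := ⟨by linarith, by linarith⟩
  have key : ∀ w ∈ S, min (dist w (γ lam)) (dist w (γ (D - lam))) ≤ lam + δ := by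
    intro w hw
    have hmin : min (dist w x) (dist w y) ≤ 2 * lam := by
      have h1 := hzmax w hw
      have h2 : min (dist z x) (dist z y) ≤ 2 * lam := by
        have : dist z y = 2 * lam := by rw [dist_comm]; simp [hlam]; ring
        calc min (dist z x) (dist z y) ≤ dist z y := min_le_right _ _
          _ = 2 * lam := this
      linarith
    obtain ⟨g, hg0, hgw, hgd⟩ := hgeo x w
    obtain ⟨h, hh0, hhw, hhd⟩ := hgeo y w
    obtain ⟨T1, T2, T3⟩ := hthin x y w γ g h ⟨hγ0, hγD, hγd⟩ ⟨hg0, hgw, hgd⟩ ⟨hh0, hhw, hhd⟩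
    set a := dist x w with ha
    set b := dist y w with hb
    have ha0 : 0 ≤ a := dist_nonneg
    have hb0 : 0 ≤ b := dist_nonneg
    have hbD : b ≤ D := by rw [hb, hD, dist_comm x y]; exact hlocy w hw
    have haD : a ≤ D := hlocx w hw
    have htri1 : b ≤ D + a := by rw [hb, hD]; calc dist y w ≤ dist y x + dist x w := dist_triangle _ _ _
      _ = D + a := by rw [dist_comm y x]
    have htri2 : a ≤ D + b := by rw [ha, hD]; calc dist x w ≤ dist x y + dist y w := dist_triangle _ _ _
      _ = D + b := rfl
    have htri3 : D ≤ a + b := by rw [ha, hb, hD]; calc dist x y ≤ dist x w + dist w y := dist_triangle _ _ _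
      _ = a + b := by rw [dist_comm w y]
    rcases le_or_gt (dist w x) (2 * lam) with hcase | hcase
    · -- use c₁ = γ lam
      have hwx : a ≤ 2 * lam := by rw [ha, dist_comm x w]; exact hcase
      set t := min lam ((D + a - b) / 2) with ht
      have ht0 : 0 ≤ t := le_min hlam0 (by linarith)
      have htα : t ≤ (D + a - b) / 2 := min_le_right _ _
      have htlam : t ≤ lam := min_le_left _ _
      have hta : t ≤ a := by
        have : (D + a - b) / 2 ≤ a := by linarith
        linarith
      have htD : t ≤ D := le_trans htlam (by linarith)
      have h1 : dist (γ t) (g t) ≤ δ := T1 t ⟨ht0, htα⟩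
      have h2 : dist w (g t) = a - t := by
        rw [← hgw]
        rw [hgd a ⟨ha0, le_refl a⟩ t ⟨ht0, hta⟩]
        rw [abs_of_nonneg (by linarith)]
      have h3 : dist (γ t) (γ lam) = lam - t := by
        rw [hγd t ⟨ht0, htD⟩ lam hlamIcc, abs_of_nonpos (by linarith)]
        ring
      have hfin : dist w (γ lam) ≤ a + lam + δ - 2 * t := by
        calc dist w (γ lam) ≤ dist w (g t) + dist (g t) (γ t) + dist (γ t) (γ lam) :=
              dist_triangle4 _ _ _ _
          _ = (a - t) + dist (γ t) (g t) + (lam - t) := by rw [h2, h3, dist_comm (g t)]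
          _ ≤ (a - t) + δ + (lam - t) := by linarith
          _ = a + lam + δ - 2 * t := by ring
      have hbound : dist w (γ lam) ≤ lam + δ := by
        rcases le_total lam ((D + a - b) / 2) with hc | hc
        · have : t = lam := min_eq_left hc
          rw [this] at hfin; linarith
        · have : t = (D + a - b) / 2 := min_eq_right hc
          rw [this] at hfin; linarith
      exact le_trans (min_le_left _ _) hbound
    · -- use c₂ = γ (D - lam)
      have hwy : b ≤ 2 * lam := by
        rw [hb, dist_comm y w]
        rcases min_le_iff.mp hmin with h' | h'
        · exfalso; linarith
        · exact h'
      set t := min lam ((D + b - a) / 2) with ht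
      have ht0 : 0 ≤ t := le_min hlam0 (by linarith)
      have htα : t ≤ (D + b - a) / 2 := min_le_right _ _
      have htlam : t ≤ lam := min_le_left _ _
      have htb : t ≤ b := by
        have : (D + b - a) / 2 ≤ b := by linarith
        linarith
      have htD : t ≤ D := le_trans htlam (by linarith)
      have h1 : dist (γ (D - t)) (h t) ≤ δ := T2 t ⟨ht0, htα⟩
      have h2 : dist w (h t) = b - t := by
        rw [← hhw]
        rw [hhd b ⟨hb0, le_refl b⟩ t ⟨ht0, htb⟩]
        rw [abs_of_nonneg (by linarith)]
      have h3 : dist (γ (D - t)) (γ (D - lam)) = lam - t := by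
        rw [hγd (D - t) ⟨by linarith, by linarith⟩ (D - lam) hlamIcc']
        rw [abs_of_nonneg (by linarith)]
        ring
      have hfin : dist w (γ (D - lam)) ≤ b + lam + δ - 2 * t := by
        calc dist w (γ (D - lam)) ≤ dist w (h t) + dist (h t) (γ (D - t)) +
              dist (γ (D - t)) (γ (D - lam)) := dist_triangle4 _ _ _ _
          _ = (b - t) + dist (γ (D - t)) (h t) + (lam - t) := by
              rw [h2, h3, dist_comm (h t)]
          _ ≤ (b - t) + δ + (lam - t) := by linarith
          _ = b + lam + δ - 2 * t := by ring
      have hbound : dist w (γ (D - lam)) ≤ lam + δ := by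
        rcases le_total lam ((D + b - a) / 2) with hc | hc
        · have : t = lam := min_eq_left hc
          rw [this] at hfin; linarith
        · have : t = (D + b - a) / 2 := min_eq_right hc
          rw [this] at hfin; linarith
      exact le_trans (min_le_right _ _) hbound
  refine ⟨key, ?_⟩
  have hr : lam ≤ pRadius 2 (↑S : Set X) := by
    apply le_csInf
    · refine ⟨D, {x}, by simp, ?_⟩
      intro s hs
      refine ⟨x, by simp, ?_⟩
      rw [dist_comm]
      exact hlocx s hs
    · rintro r ⟨C, hC2, hCdom⟩
      obtain ⟨cx, hcx, hdx⟩ := hCdom x (by exact_mod_cast hx)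
      obtain ⟨cy, hcy, hdy⟩ := hCdom y (by exact_mod_cast hy)
      obtain ⟨cz, hcz, hdz⟩ := hCdom z (by exact_mod_cast hz)
      have hpair : cx = cy ∨ cx = cz ∨ cy = cz := by
        classical
        by_contra hcon
        push_neg at hcon
        obtain ⟨h1, h2, h3⟩ := hcon
        have hsub : ({cx, cy, cz} : Finset X) ⊆ C := by
          intro u hu
          simp only [Finset.mem_insert, Finset.mem_singleton] at hu
          rcases hu with rfl | rfl | rfl <;> assumption
        have hcard : ({cx, cy, cz} : Finset X).card = 3 := by
          rw [Finset.card_insert_of_notMem (by simp [h1, h2]),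
            Finset.card_insert_of_notMem (by simp [h3]), Finset.card_singleton]
        have := Finset.card_le_card hsub
        omega
      have hxy : 2 * lam ≤ dist x y := h2D
      have hxz : 2 * lam ≤ dist x z := by
        have : dist y z = 2 * lam := by rw [hlam]; ring
        linarith
      have hyz : 2 * lam ≤ dist y z := by rw [hlam]; linarith [dist_nonneg (x := y) (y := z)]
      rcases hpair with heq | heq | heq
      · have : dist x y ≤ dist x cx + dist cy y := by
          rw [heq]; exact dist_triangle _ _ _
        rw [dist_comm cy y] at this
        linarith
      · have : dist x z ≤ dist x cx + dist cz z := by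
          rw [heq]; exact dist_triangle _ _ _
        rw [dist_comm cz z] at this
        linarith
      · have : dist y z ≤ dist y cy + dist cz z := by
          rw [heq]; exact dist_triangle _ _ _
        rw [dist_comm cz z] at this
        linarith
  intro s hs
  have hs' : s ∈ S := by exact_mod_cast hs
  have hk := key s hs'
  rcases le_total (dist s (γ lam)) (dist s (γ (D - lam))) with hc | hc
  · refine ⟨γ lam, Or.inl rfl, ?_⟩
    rw [min_eq_left hc] at hk
    linarith
  · refine ⟨γ (D - lam), Or.inr rfl, ?_⟩
    rw [min_eq_right hc] at hk
    linarith
end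

section
/- Let G be a δ-hyperbolic graph and let v_i, v_j, v₀ be vertices with d(v_i, v_j) ≥ 2λ. Let c_i = [v_i,v₀][λ], c_j = [v_j,v₀][λ], c_i' = [v_i,v_j][λ] and c_j' = [v_j,v_i][λ] for a common geodesic triangle Δ(v_i, v_j, v₀). Then at least one of d(c_i, c_i') ≤ δ and d(c_j, c_j') ≤ δ holds. -/
/-- For vertices `vᵢ, vⱼ, v₀` with `dist vᵢ vⱼ ≥ 2λ`, the points `cᵢ = [vᵢ,v₀][λ]`,
`cⱼ = [vⱼ,v₀][λ]`, `cᵢ' = [vᵢ,vⱼ][λ]`, `cⱼ' = [vⱼ,vᵢ][λ]` of a geodesic triangle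
`Δ(vᵢ, vⱼ, v₀)` satisfy `dist cᵢ cᵢ' ≤ δ` or `dist cⱼ cⱼ' ≤ δ`. -/
theorem close_centre_on_side {X : Type*} [MetricSpace X] {δ lam : ℝ}
    (hδ : 0 ≤ δ) (hlam : 0 ≤ lam)
    (hgeo : GeodesicMS X) (hthin : ThinTriangles X δ)
    (vi vj v0 : X) (hij : 2 * lam ≤ dist vi vj)
    (hli : lam ≤ dist vi v0) (hlj : lam ≤ dist vj v0)
    (f g h : ℝ → X)
    (hf : IsGeodesicFrom f vi v0) (hg : IsGeodesicFrom g vj v0)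
    (hh : IsGeodesicFrom h vi vj) :
    dist (f lam) (h lam) ≤ δ ∨ dist (g lam) (h (dist vi vj - lam)) ≤ δ := by
  obtain ⟨h1, h2, -⟩ := hthin vi vj v0 h f g hh hf hg
  rcases le_or_gt lam ((dist vi vj + dist vi v0 - dist vj v0) / 2) with hc | hc
  · left
    rw [dist_comm]
    exact h1 lam ⟨hlam, hc⟩
  · right
    rw [dist_comm]
    have hc2 : lam ≤ (dist vi vj + dist vj v0 - dist vi v0) / 2 := by
      have := dist_triangle vi vj v0 -- not needed
      linarith [hij, hc]
    exact h2 lam ⟨hlam, hc2⟩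
end

section
/- Let X be a δ-hyperbolic geodesic metric space and S a finite subset. Then r_p(S) ≤ (1/2) d_{p+1}(S) + δ for every positive integer p. -/
/-!
Let `d = d_{p+1}(S)`, so that `S` has no `p + 1` points pairwise more than `d` apart. Pick any
`x ∈ S` and a point `y ∈ S` farthest from `x`, and let `c` be the point of `[x, y]` at distance
`min (d / 2) |xy|` from `y`. Thin triangles `x y s` show that `c` is `(d / 2 + δ)`-close to every
`s ∈ S` within `d` of `y`. The points of `S` farther than `d` from `y` contain no `p` points
pairwise more than `d` apart (together with `y` they would give `p + 1`), so by induction `p - 1`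
further centres cover them.
-/

section

open Finset

variable {X : Type*} [MetricSpace X]

lemma IsGeodesicFrom.dist_right {γ : ℝ → X} {x y : X} (hγ : IsGeodesicFrom γ x y) {t : ℝ}
    (ht : t ∈ Set.Icc 0 (dist x y)) : dist (γ t) y = dist x y - t :=
  calc dist (γ t) y = dist (γ t) (γ (dist x y)) := by rw [hγ.2.1]
    _ = |t - dist x y| := hγ.2.2 t ht _ ⟨dist_nonneg, le_rfl⟩
    _ = dist x y - t := by rw [abs_of_nonpos (by linarith [ht.2])]; ring

lemma ThinTriangles.dist_le_of_farthest {δ : ℝ} (hgeo : GeodesicMS X)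
    (hthin : ThinTriangles X δ) {x y s : X} {f : ℝ → X} (hf : IsGeodesicFrom f x y) {d : ℝ}
    (hd : 0 ≤ d) (hxs : dist x s ≤ dist x y) (hys : dist y s ≤ d) :
    dist s (f (dist x y - min (d / 2) (dist x y))) ≤ d / 2 + δ := by
  obtain ⟨g, hg⟩ := hgeo x s
  obtain ⟨h, hh⟩ := hgeo y s
  obtain ⟨thin_x, thin_y, -⟩ := hthin x y s f g h hf hg hh
  set t := min (d / 2) (dist x y)
  have ht₀ : 0 ≤ t := le_min (by linarith) dist_nonneg
  have htd : t ≤ d / 2 := min_le_left _ _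
  have htxy : t ≤ dist x y := min_le_right _ _
  have hxy : dist x y ≤ dist x s + dist y s := by linarith [dist_triangle x s y, dist_comm s y]
  have hys' : dist y s ≤ dist x y + dist x s := by linarith [dist_triangle y x s, dist_comm x y]
  by_cases hcase : t ≤ (dist x y + dist y s - dist x s) / 2
  · -- `f (dist x y - t)` is `δ`-close to the point of `[y, s]` at distance `t` from `y`
    have hclose := thin_y t ⟨ht₀, hcase⟩
    have hhs := hh.dist_right (t := t) ⟨ht₀, by linarith⟩
    have hst : dist y s - d / 2 ≤ t := le_min (by linarith) (by linarith)
    calc dist s (f (dist x y - t)) ≤ dist (h t) s + dist (h t) (f (dist x y - t)) :=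
          dist_triangle_left _ _ _
      _ ≤ d / 2 + δ := by rw [dist_comm (h t) (f _)]; linarith
  · -- `f (dist x y - t)` is `δ`-close to the point of `[x, s]` at the same distance from `x`
    have hclose := thin_x (dist x y - t) ⟨by linarith, by linarith⟩
    have hgs := hg.dist_right (t := dist x y - t) ⟨by linarith, by linarith⟩
    calc dist s (f (dist x y - t)) ≤ dist (g (dist x y - t)) s
          + dist (g (dist x y - t)) (f (dist x y - t)) := dist_triangle_left _ _ _
      _ ≤ d / 2 + δ := by rw [dist_comm (g _) (f _)]; linarith

def HasSeparatedSubset (n : ℕ) (d : ℝ) (S : Finset X) : Prop :=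
  ∃ D ⊆ S, n ≤ D.card ∧ (D : Set X).Pairwise fun u v => d < dist u v

lemma HasSeparatedSubset.insert_of_far [DecidableEq X] {n : ℕ} {d : ℝ} (hd : 0 ≤ d)
    {S : Finset X} {y : X} (hy : y ∈ S)
    (h : HasSeparatedSubset n d (S.filter fun s => d < dist s y)) :
    HasSeparatedSubset (n + 1) d S := by
  obtain ⟨D, hDS, hcard, hpair⟩ := h
  have hfar : ∀ u ∈ D, u ∈ S ∧ d < dist u y := fun u hu => mem_filter.mp (hDS hu)
  have hyD : y ∉ D := fun hyD => by linarith [(hfar y hyD).2, dist_self y]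
  refine ⟨insert y D, insert_subset hy fun u hu => (hfar u hu).1, ?_, ?_⟩
  · rw [card_insert_of_notMem hyD]
    omega
  · rw [coe_insert, Set.pairwise_insert]
    exact ⟨hpair, fun u hu _ => ⟨by rw [dist_comm]; exact (hfar u hu).2, (hfar u hu).2⟩⟩

theorem exists_dominates_of_not_hasSeparatedSubset {δ : ℝ} (hgeo : GeodesicMS X)
    (hthin : ThinTriangles X δ) {d : ℝ} (hd : 0 ≤ d) (p : ℕ) (S : Finset X)
    (hS : ¬ HasSeparatedSubset (p + 1) d S) :
    ∃ C : Finset X, C.card ≤ p ∧ Dominates (d / 2 + δ) (C : Set X) (S : Set X) := by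
  classical
  induction p generalizing S with
  | zero =>
    obtain rfl | ⟨s, hs⟩ := S.eq_empty_or_nonempty
    · exact ⟨∅, card_empty.le, fun s hs => absurd hs (notMem_empty s)⟩
    · exact absurd ⟨{s}, singleton_subset_iff.mpr hs, by simp, by simp⟩ hS
  | succ p ih =>
    obtain rfl | ⟨x, hx⟩ := S.eq_empty_or_nonempty
    · exact ⟨∅, by simp, fun s hs => absurd hs (notMem_empty s)⟩
    obtain ⟨y, hy, hfarthest⟩ := S.exists_max_image (dist x) ⟨x, hx⟩
    obtain ⟨f, hf⟩ := hgeo x y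
    obtain ⟨C, hC, hdom⟩ :=
      ih (S.filter fun s => d < dist s y) fun h => hS (h.insert_of_far hd hy)
    refine ⟨insert (f (dist x y - min (d / 2) (dist x y))) C,
      (card_insert_le _ _).trans (by omega), fun s hs => ?_⟩
    by_cases hsy : dist s y ≤ d
    · exact ⟨_, mem_insert_self _ _, hthin.dist_le_of_farthest hgeo hf hd
        (hfarthest s hs) (by rwa [dist_comm])⟩
    · obtain ⟨c, hc, hsc⟩ := hdom s (mem_filter.mpr ⟨hs, not_le.mp hsy⟩)
      exact ⟨c, mem_insert_of_mem hc, hsc⟩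

lemma le_pDiam {q : ℕ} (hq : 2 ≤ q) {S : Set X} (hS : Bornology.IsBounded S) {D : Finset X}
    (hDS : ↑D ⊆ S) (hD : q ≤ D.card) {r : ℝ}
    (hr : (D : Set X).Pairwise fun u v => r ≤ dist u v) : r ≤ pDiam q S := by
  refine le_csSup ⟨Metric.diam S, ?_⟩ ⟨D, hDS, hD, hr⟩
  rintro r' ⟨D', hD'S, hD', hr'⟩
  obtain ⟨u, hu, v, hv, huv⟩ := one_lt_card.mp (by omega : 1 < D'.card)
  exact (hr' hu hv huv).trans (Metric.dist_le_diam_of_mem hS (hD'S hu) (hD'S hv))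

lemma pDiam_nonneg (q : ℕ) (S : Set X) : 0 ≤ pDiam q S := by
  by_cases h : ∃ D : Finset X, ↑D ⊆ S ∧ q ≤ D.card
  · obtain ⟨D, hDS, hD⟩ := h
    exact Real.sSup_nonneg' ⟨0, ⟨D, hDS, hD, fun _ _ _ _ _ => dist_nonneg⟩, le_rfl⟩
  · exact Real.sSup_nonneg fun r ⟨D, hDS, hD, _⟩ => absurd ⟨D, hDS, hD⟩ h

lemma not_hasSeparatedSubset_pDiam {q : ℕ} (hq : 2 ≤ q) (S : Finset X) :
    ¬ HasSeparatedSubset q (pDiam q (S : Set X)) S := by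
  rintro ⟨D, hDS, hD, hsep⟩
  have hpairs : D.offDiag.Nonempty := by
    obtain ⟨u, hu, v, hv, huv⟩ := one_lt_card.mp (by omega : 1 < D.card)
    exact ⟨(u, v), mem_offDiag.mpr ⟨hu, hv, huv⟩⟩
  -- the least distance between two points of `D` is itself a witness for `pDiam`
  set m := D.offDiag.inf' hpairs fun uv => dist uv.1 uv.2
  have hm : m ≤ pDiam q (S : Set X) := le_pDiam hq S.finite_toSet.isBounded (coe_subset.mpr hDS) hD fun u hu v hv huv =>
    inf'_le (fun uv : X × X => dist uv.1 uv.2) (b := (u, v)) (mem_offDiag.mpr ⟨hu, hv, huv⟩)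
  have hlt : pDiam q (S : Set X) < m := (lt_inf'_iff _).mpr fun uv huv =>
    hsep (mem_offDiag.mp huv).1 (mem_offDiag.mp huv).2.1 (mem_offDiag.mp huv).2.2
  exact hm.not_gt hlt

lemma pRadius_le_of_dominates {p : ℕ} {S : Set X} (hS : S.Nonempty) {C : Finset X}
    (hC : C.card ≤ p) {r : ℝ} (hdom : Dominates r (C : Set X) S) : pRadius p S ≤ r := by
  refine csInf_le ⟨0, ?_⟩ ⟨C, hC, hdom⟩
  rintro r' ⟨C', -, hdom'⟩
  obtain ⟨s, hs⟩ := hS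
  obtain ⟨c, -, hsc⟩ := hdom' s hs
  exact dist_nonneg.trans hsc

end

theorem chepoi_estellon_general {X : Type*} [MetricSpace X] {δ : ℝ}
    (hgeo : GeodesicMS X) (hthin : ThinTriangles X δ)
    (S : Finset X) (hS : S.Nonempty) (p : ℕ) (hp : 1 ≤ p) :
    pRadius p (↑S : Set X) ≤ (1 / 2) * pDiam (p + 1) (↑S : Set X) + δ := by
  have hq : 2 ≤ p + 1 := by omega
  obtain ⟨C, hC, hdom⟩ := exists_dominates_of_not_hasSeparatedSubset hgeo hthin
    (pDiam_nonneg _ _) p S (not_hasSeparatedSubset_pDiam hq S)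
  calc pRadius p (↑S : Set X) ≤ pDiam (p + 1) (↑S : Set X) / 2 + δ :=
        pRadius_le_of_dominates (Finset.coe_nonempty.mpr hS) hC hdom
    _ = (1 / 2) * pDiam (p + 1) (↑S : Set X) + δ := by ring

/-- Chepoi–Estellon: in a δ-hyperbolic geodesic metric space, for every finite subset `S`
and every `p ≥ 1`, `r_p(S) ≤ d_{p+1}(S)/2 + δ`. -/
theorem chepoi_estellon {X : Type*} [MetricSpace X] {δ : ℝ} (hδ : 0 ≤ δ)
    (hgeo : GeodesicMS X) (hthin : ThinTriangles X δ)
    (S : Finset X) (hS : S.Nonempty) (p : ℕ) (hp : 1 ≤ p) :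
    pRadius p (↑S : Set X) ≤ (1 / 2) * pDiam (p + 1) (↑S : Set X) + δ :=
  chepoi_estellon_general hgeo hthin S hS p hp
end

section
/- Let D = {v₀, v₁, …, v_p} be vertices of a δ-hyperbolic graph G with pairwise distances ≥ 2λ, satisfying: (a) d(v₀, v_i) = 2λ for some i; (b) for each v_i at distance exactly 2λ from some other member of D there is no vertex w with d(w, v_k) > 2λ for all v_k ∈ D \ {v_i}; (c) for each i ≥ 1 there is no vertex v with d(v₀,v) > d(v₀,v_i) + 2δ, d(v_i,v) ≤ 2λ, and d(v,v_j) > 2λ for all j ≠ i. Let c_i = [v_i, v₀][λ] for 1 ≤ i ≤ p. Then C = {c₁, …, c_p} (λ + 3δ)-dominates V(G). -/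
private lemma geod_dist {X : Type*} [MetricSpace X] {g : ℝ → X} {x y : X}
    (h : IsGeodesicFrom g x y) {t : ℝ} (h0 : 0 ≤ t) (h1 : t ≤ dist x y) :
    dist (g t) y = dist x y - t := by
  have h2 := h.2.2 t ⟨h0, h1⟩ (dist x y) ⟨dist_nonneg, le_rfl⟩
  rw [h.2.1] at h2
  rw [h2, abs_of_nonpos (by linarith)]
  ring

private lemma thin_quad {X : Type*} [MetricSpace X] {δ : ℝ}
    (hgeo : GeodesicMS X) (hthin : ThinTriangles X δ) (w x y z : X) {t : ℝ}
    (ht0 : 0 ≤ t) (htx : t ≤ (dist w x + dist w z - dist x z) / 2)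
    (hty : t ≤ (dist w y + dist w z - dist y z) / 2) :
    dist x y + 2 * t ≤ dist w x + dist w y + 2 * δ := by
  obtain ⟨f, hf⟩ := hgeo w x
  obtain ⟨g, hg⟩ := hgeo w z
  obtain ⟨h, hh⟩ := hgeo w y
  obtain ⟨k, hk⟩ := hgeo x z
  obtain ⟨l, hl⟩ := hgeo y z
  have h1 := (hthin w x z f g k hf hg hk).1 t ⟨ht0, htx⟩
  have h2 := (hthin w y z h g l hh hg hl).1 t ⟨ht0, hty⟩
  have htwx : t ≤ dist w x := by
    have := dist_triangle w x z
    linarith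
  have htwy : t ≤ dist w y := by
    have := dist_triangle w y z
    linarith
  have dxf : dist (f t) x = dist w x - t := geod_dist hf ht0 htwx
  have dyh : dist (h t) y = dist w y - t := geod_dist hh ht0 htwy
  have t1 : dist x y ≤ dist x (f t) + dist (f t) (g t) + dist (g t) (h t) + dist (h t) y := by
    calc dist x y ≤ dist x (h t) + dist (h t) y := dist_triangle _ _ _
      _ ≤ (dist x (f t) + dist (f t) (h t)) + dist (h t) y := by
            linarith [dist_triangle x (f t) (h t)]
      _ ≤ _ := by linarith [dist_triangle (f t) (g t) (h t)]
  linarith [dist_comm x (f t), dist_comm (g t) (h t)]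

/-- If `D = {v₀, …, v_p}` is a set of vertices of a δ-hyperbolic graph with pairwise
distances ≥ 2λ satisfying Properties (a), (b) and (c), then the p points
`cᵢ = [vᵢ,v₀][λ]` (1 ≤ i ≤ p) `(λ + 3δ)`-dominate the vertex set. -/
theorem centres_dominate {X : Type*} [MetricSpace X] {δ lam : ℝ}
    (hδ : 0 ≤ δ) (hlam : 0 ≤ lam)
    (hgeo : GeodesicMS X) (hthin : ThinTriangles X δ)
    (V : Finset X) (p : ℕ) (hp : 1 ≤ p)
    (v : Fin (p + 1) → X) (hvV : ∀ i, v i ∈ V)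
    (hpack : ∀ i j, i ≠ j → 2 * lam ≤ dist (v i) (v j))
    -- Property (a)
    (ha : ∃ i : Fin (p + 1), i ≠ 0 ∧ dist (v 0) (v i) = 2 * lam)
    -- Property (b)
    (hb : ∀ i : Fin (p + 1), (∃ j, j ≠ i ∧ dist (v i) (v j) = 2 * lam) →
        ¬ ∃ w ∈ V, ∀ k, k ≠ i → 2 * lam < dist w (v k))
    -- Property (c)
    (hc : ∀ i : Fin (p + 1), i ≠ 0 →
        ¬ ∃ w ∈ V, dist (v 0) (v i) + 2 * δ < dist (v 0) w ∧ dist (v i) w ≤ 2 * lam ∧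
          ∀ j, j ≠ i → 2 * lam < dist w (v j))
    (γ : Fin (p + 1) → ℝ → X) (hγ : ∀ i, IsGeodesicFrom (γ i) (v i) (v 0)) :
    ∀ w ∈ V, ∃ i : Fin (p + 1), i ≠ 0 ∧ dist w (γ i lam) ≤ lam + 3 * δ := by
  classical
  intro w hwV
  obtain ⟨i₀, hi₀, hdist₀⟩ := ha
  have hb0 := hb 0 ⟨i₀, hi₀, hdist₀⟩
  push_neg at hb0
  obtain ⟨k₀, hk₀, hk₀le⟩ := hb0 w hwV
  set T : Finset (Fin (p+1)) := Finset.univ.filter (fun i => i ≠ 0 ∧ dist w (v i) ≤ 2*lam)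
    with hT
  have hTne : T.Nonempty := ⟨k₀, Finset.mem_filter.2 ⟨Finset.mem_univ _, hk₀, hk₀le⟩⟩
  obtain ⟨i, hiT, hmax⟩ := T.exists_max_image (fun i => dist (v 0) (v i)) hTne
  have hi0 : i ≠ 0 := (Finset.mem_filter.1 hiT).2.1
  have hiw : dist w (v i) ≤ 2*lam := (Finset.mem_filter.1 hiT).2.2
  by_cases hcase : dist (v 0) w ≤ dist (v 0) (v i) + 2*δ
  · refine ⟨i, hi0, ?_⟩
    obtain ⟨g, hg⟩ := hgeo (v i) w
    obtain ⟨h, hh⟩ := hgeo (v 0) w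
    have thin := hthin (v i) (v 0) w (γ i) g h (hγ i) hg hh
    have hD : 2*lam ≤ dist (v i) (v 0) := hpack i 0 hi0
    have hcd : dist (v i) (v 0) = dist (v 0) (v i) := dist_comm _ _
    have hiw' : dist (v i) w = dist w (v i) := dist_comm _ _
    have htri : dist (v i) (v 0) ≤ dist (v i) w + dist (v 0) w := by
      have := dist_triangle (v i) w (v 0)
      linarith [dist_comm w (v 0)]
    rcases le_total lam ((dist (v i) (v 0) + dist (v i) w - dist (v 0) w)/2) with hα | hα
    · have h1 := thin.1 lam ⟨hlam, hα⟩
      have hld : lam ≤ dist (v i) w := by linarith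
      have h2 := geod_dist hg hlam hld
      calc dist w (γ i lam) ≤ dist w (g lam) + dist (g lam) (γ i lam) := dist_triangle _ _ _
        _ ≤ lam + 3*δ := by
            rw [dist_comm w (g lam), dist_comm (g lam) (γ i lam)]
            linarith
    · have ht0 : 0 ≤ dist (v i) (v 0) - lam := by linarith
      have htβ : dist (v i) (v 0) - lam
          ≤ (dist (v i) (v 0) + dist (v 0) w - dist (v i) w)/2 := by linarith
      have h2 := thin.2.1 (dist (v i) (v 0) - lam) ⟨ht0, htβ⟩
      have harg : dist (v i) (v 0) - (dist (v i) (v 0) - lam) = lam := by ring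
      rw [harg] at h2
      have htd : dist (v i) (v 0) - lam ≤ dist (v 0) w := by linarith
      have h3 := geod_dist hh ht0 htd
      calc dist w (γ i lam)
          ≤ dist w (h (dist (v i) (v 0) - lam))
            + dist (h (dist (v i) (v 0) - lam)) (γ i lam) := dist_triangle _ _ _
        _ ≤ lam + 3*δ := by
            rw [dist_comm w (h _), dist_comm (h _) (γ i lam)]
            linarith
  · push_neg at hcase
    exfalso
    have hnj : ∃ j, j ≠ i ∧ dist w (v j) ≤ 2*lam := by
      by_contra hno
      push_neg at hno
      exact hc i hi0 ⟨w, hwV, hcase, by rw [dist_comm]; exact hiw, hno⟩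
    obtain ⟨j, hji, hjw⟩ := hnj
    have h2l : 2*lam ≤ dist (v 0) (v i) := hpack 0 i (Ne.symm hi0)
    have hj0 : j ≠ 0 := by
      rintro rfl
      rw [dist_comm] at hjw
      linarith
    have hjT : j ∈ T := Finset.mem_filter.2 ⟨Finset.mem_univ _, hj0, hjw⟩
    have hjle : dist (v 0) (v j) ≤ dist (v 0) (v i) := hmax j hjT
    have hij : 2*lam ≤ dist (v i) (v j) := hpack i j (fun hh => hji hh.symm)
    have e1 : dist w (v 0) = dist (v 0) w := dist_comm _ _
    have e2 : dist (v i) (v 0) = dist (v 0) (v i) := dist_comm _ _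
    have e3 : dist (v j) (v 0) = dist (v 0) (v j) := dist_comm _ _
    have eiw : dist (v i) w = dist w (v i) := dist_comm _ _
    have ejw : dist (v j) w = dist w (v j) := dist_comm _ _
    rcases le_total ((dist w (v i) + dist w (v 0) - dist (v i) (v 0))/2)
        ((dist w (v j) + dist w (v 0) - dist (v j) (v 0))/2) with hmn | hmn
    · have ht0 : 0 ≤ (dist w (v i) + dist w (v 0) - dist (v i) (v 0))/2 := by
        linarith [dist_triangle (v i) w (v 0)]
      have hq := thin_quad hgeo hthin w (v i) (v j) (v 0) ht0 le_rfl hmn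
      linarith
    · have ht0 : 0 ≤ (dist w (v j) + dist w (v 0) - dist (v j) (v 0))/2 := by
        linarith [dist_triangle (v j) w (v 0)]
      have hq := thin_quad hgeo hthin w (v i) (v j) (v 0) ht0 hmn le_rfl
      linarith
end

section
/- Under the hypotheses of the previous lemma (set D satisfying (a), (b), (c) with parameter λ and centers c_i = [v_i,v₀][λ]), if a vertex w satisfies d(w, c_j) > λ + 3δ for all j and d(w, v_i) ≤ 2λ for some i, then d(w, v_j) > 2λ for every j ≠ i. -/
private lemma lemA {X : Type*} [MetricSpace X] {δ lam : ℝ}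
    (hδ : 0 ≤ δ) (hlam : 0 ≤ lam)
    (hgeo : GeodesicMS X) (hthin : ThinTriangles X δ)
    (x y z : X) (γ : ℝ → X) (hγ : IsGeodesicFrom γ x y)
    (hxy : 2 * lam ≤ dist x y) (hxz : dist x z ≤ 2 * lam)
    (hyz : dist y z ≤ 2 * lam) :
    dist z (γ lam) ≤ lam + δ := by
  obtain ⟨g, hg⟩ := hgeo x z
  obtain ⟨h, hh⟩ := hgeo y z
  have htri1 : dist y z ≤ dist x y + dist x z := by
    have := dist_triangle y x z
    rw [dist_comm y x] at this; linarith
  have htri2 : dist x y ≤ dist x z + dist y z := by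
    have := dist_triangle x z y
    rw [dist_comm z y] at this; linarith
  have hs0 : 0 ≤ (dist x y + dist x z - dist y z) / 2 := by linarith
  set t := min lam ((dist x y + dist x z - dist y z) / 2) with htdef
  have ht0 : 0 ≤ t := le_min hlam hs0
  have htlam : t ≤ lam := min_le_left _ _
  have hts : t ≤ (dist x y + dist x z - dist y z) / 2 := min_le_right _ _
  have h2t : dist x z ≤ 2 * t := by
    rcases min_cases lam ((dist x y + dist x z - dist y z) / 2) with ⟨he, h1⟩ | ⟨he, h1⟩ <;>
      rw [htdef, he] <;> linarith
  have hlamxy : lam ≤ dist x y := by linarith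
  have d1 : dist (γ lam) (γ t) = lam - t := by
    rw [hγ.2.2 lam ⟨hlam, hlamxy⟩ t ⟨ht0, by linarith⟩]
    exact abs_of_nonneg (by linarith)
  have d2 : dist (γ t) (g t) ≤ δ := (hthin x y z γ g h hγ hg hh).1 t ⟨ht0, hts⟩
  have htxz : t ≤ dist x z := by linarith
  have d3 : dist (g t) z = dist x z - t := by
    have := hg.2.2 t ⟨ht0, htxz⟩ (dist x z) ⟨dist_nonneg, le_refl _⟩
    rw [hg.2.1] at this
    rw [this, abs_of_nonpos (by linarith)]; ring
  have h4 : dist z (γ lam) ≤ dist z (g t) + dist (g t) (γ t) + dist (γ t) (γ lam) :=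
    dist_triangle4 z (g t) (γ t) (γ lam)
  rw [dist_comm z (g t), dist_comm (g t) (γ t), dist_comm (γ t) (γ lam)] at h4
  rw [d1, d3] at h4
  linarith

private lemma lemB {X : Type*} [MetricSpace X] {δ lam : ℝ}
    (hδ : 0 ≤ δ) (hlam : 0 ≤ lam)
    (hgeo : GeodesicMS X) (hthin : ThinTriangles X δ)
    (x y u w : X) (γ : ℝ → X) (hγ : IsGeodesicFrom γ x y)
    (hxy : 2 * lam ≤ dist x y) (hxu : 2 * lam ≤ dist x u)
    (hα : lam ≤ (dist x y + dist x u - dist y u) / 2)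
    (hxw : dist x w ≤ 2 * lam) (huw : dist u w ≤ 2 * lam) :
    dist w (γ lam) ≤ lam + 2 * δ := by
  obtain ⟨g, hg⟩ := hgeo x u
  obtain ⟨h', hh'⟩ := hgeo y u
  have h1 : dist w (g lam) ≤ lam + δ := lemA hδ hlam hgeo hthin x u w g hg hxu hxw huw
  have h2 : dist (γ lam) (g lam) ≤ δ := (hthin x y u γ g h' hγ hg hh').1 lam ⟨hlam, hα⟩
  have h3 : dist w (γ lam) ≤ dist w (g lam) + dist (g lam) (γ lam) := dist_triangle _ _ _
  rw [dist_comm (g lam) (γ lam)] at h3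
  linarith

/-- Claim in the domination lemma: with `D = {v₀, …, v_p}` satisfying (a), (b), (c) and
centres `cᵢ = [vᵢ,v₀][λ]`, if a vertex `w` is farther than `λ + 3δ` from every centre
and `dist w (v i) ≤ 2λ` for some `i`, then `dist w (v j) > 2λ` for every `j ≠ i`. -/
theorem claim_far_from_others {X : Type*} [MetricSpace X] {δ lam : ℝ}
    (hδ : 0 ≤ δ) (hlam : 0 ≤ lam)
    (hgeo : GeodesicMS X) (hthin : ThinTriangles X δ)
    (V : Finset X) (p : ℕ) (hp : 1 ≤ p)
    (v : Fin (p + 1) → X) (hvV : ∀ i, v i ∈ V)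
    (hpack : ∀ i j, i ≠ j → 2 * lam ≤ dist (v i) (v j))
    (ha : ∃ i : Fin (p + 1), i ≠ 0 ∧ dist (v 0) (v i) = 2 * lam)
    (hb : ∀ i : Fin (p + 1), (∃ j, j ≠ i ∧ dist (v i) (v j) = 2 * lam) →
        ¬ ∃ w ∈ V, ∀ k, k ≠ i → 2 * lam < dist w (v k))
    (hc : ∀ i : Fin (p + 1), i ≠ 0 →
        ¬ ∃ w ∈ V, dist (v 0) (v i) + 2 * δ < dist (v 0) w ∧ dist (v i) w ≤ 2 * lam ∧
          ∀ j, j ≠ i → 2 * lam < dist w (v j))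
    (γ : Fin (p + 1) → ℝ → X) (hγ : ∀ i, IsGeodesicFrom (γ i) (v i) (v 0))
    (w : X) (hw : w ∈ V)
    (hfar : ∀ i : Fin (p + 1), i ≠ 0 → lam + 3 * δ < dist w (γ i lam))
    (i : Fin (p + 1)) (hwi : dist w (v i) ≤ 2 * lam) :
    ∀ j, j ≠ i → 2 * lam < dist w (v j) := by
  intro j hji
  by_contra hcon
  push_neg at hcon
  have hij : i ≠ j := Ne.symm hji
  have hKey : ∀ k u : Fin (p + 1), k ≠ 0 → k ≠ u →
      dist w (v k) ≤ 2 * lam → dist w (v u) ≤ 2 * lam →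
      lam ≤ (dist (v k) (v 0) + dist (v k) (v u) - dist (v 0) (v u)) / 2 → False := by
    intro k u hk0 hku hwk hwu hα
    have hb := lemB hδ hlam hgeo hthin (v k) (v 0) (v u) w (γ k) (hγ k)
      (hpack k 0 hk0) (hpack k u hku) hα
      (by rw [dist_comm]; exact hwk) (by rw [dist_comm]; exact hwu)
    have := hfar k hk0
    linarith
  by_cases hi0 : i = 0
  · have hj0 : j ≠ 0 := by rw [hi0] at hji; exact hji
    refine hKey j i hj0 (Ne.symm hij) hcon hwi ?_
    rw [hi0, dist_self]
    have := hpack j 0 hj0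
    linarith
  · by_cases hj0 : j = 0
    · refine hKey i j hi0 hij hwi hcon ?_
      rw [hj0, dist_self]
      have := hpack i 0 hi0
      linarith
    · rcases le_total (dist (v i) (v 0)) (dist (v j) (v 0)) with hle | hle
      · refine hKey j i hj0 hji hcon hwi ?_
        have hp := hpack j i hji
        have hc1 : dist (v 0) (v i) = dist (v i) (v 0) := dist_comm _ _
        linarith
      · refine hKey i j hi0 hij hwi hcon ?_
        have hp := hpack i j hij
        have hc1 : dist (v 0) (v j) = dist (v j) (v 0) := dist_comm _ _
        linarith
end

section
/- In a finite metric space, define for a set P of p+1 points with minimum pairwise distance κ the potential φ(P) = p(κ+1) − η(P), where η(P) is the number of points of P realizing distance exactly κ to some other point of P. If an 'improvement' replaces a point u ∈ P (that is at distance κ from another point of P) by a point w whose distance to every point of P \ {u} strictly exceeds κ, then the potential strictly increases: φ((P \ {u}) ∪ {w}) > φ(P). -/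
/-- The minimum pairwise distance `κ` of a finite point set `P`. -/
noncomputable def minDist {X : Type*} [MetricSpace X] (P : Finset X) : ℝ :=
  sInf {d : ℝ | ∃ u ∈ P, ∃ v ∈ P, u ≠ v ∧ dist u v = d}

/-- The number `η(P)` of points of `P` realizing distance exactly `κ` to another point of `P`. -/
noncomputable def numRealizing {X : Type*} [MetricSpace X] (P : Finset X) : ℕ :=
  Set.ncard {u : X | u ∈ P ∧ ∃ v ∈ P, v ≠ u ∧ dist u v = minDist P}

/-- The potential `φ(P) = p(κ+1) − η(P)` of a set `P` of `p+1` points. -/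
noncomputable def potential {X : Type*} [MetricSpace X] (p : ℕ) (P : Finset X) : ℝ :=
  p * (minDist P + 1) - numRealizing P

lemma distSet_bdd {X : Type*} [MetricSpace X] (S : Finset X) :
    BddBelow {d : ℝ | ∃ u ∈ S, ∃ v ∈ S, u ≠ v ∧ dist u v = d} :=
  ⟨0, fun d ⟨_, _, _, _, _, hd⟩ => hd ▸ dist_nonneg⟩

lemma minDist_le {X : Type*} [MetricSpace X] {S : Finset X} {x y : X}
    (hx : x ∈ S) (hy : y ∈ S) (hxy : x ≠ y) : minDist S ≤ dist x y :=
  csInf_le (distSet_bdd S) ⟨x, hx, y, hy, hxy, rfl⟩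

lemma distSet_finite {X : Type*} [MetricSpace X] (S : Finset X) :
    {d : ℝ | ∃ u ∈ S, ∃ v ∈ S, u ≠ v ∧ dist u v = d}.Finite := by
  apply Set.Finite.subset (((S ×ˢ S).image fun q : X × X => dist q.1 q.2).finite_toSet)
  rintro d ⟨a, ha, b, hb, -, rfl⟩
  simp only [Finset.coe_image, Set.mem_image, Finset.mem_coe, Finset.mem_product]
  exact ⟨(a, b), ⟨ha, hb⟩, rfl⟩

lemma minDist_mem {X : Type*} [MetricSpace X] {S : Finset X} (h : 1 < S.card) :
    minDist S ∈ {d : ℝ | ∃ u ∈ S, ∃ v ∈ S, u ≠ v ∧ dist u v = d} := by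
  obtain ⟨a, ha, b, hb, hab⟩ := Finset.one_lt_card.mp h
  exact Set.Nonempty.csInf_mem ⟨dist a b, a, ha, b, hb, hab, rfl⟩ (distSet_finite S)

/-- An improvement (replacing a point `u ∈ P` realizing the minimum pairwise distance `κ`
by a point `w` whose distance to every point of `P \ {u}` strictly exceeds `κ`) strictly
increases the potential. (Distances are integer valued, as in a graph with unit edges.) -/
theorem potential_increases {X : Type*} [MetricSpace X] [DecidableEq X]
    (hint : ∀ x y : X, ∃ n : ℕ, dist x y = n)
    (p : ℕ) (hp : 1 ≤ p) (P : Finset X) (hcard : P.card = p + 1)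
    (u w : X) (hu : u ∈ P) (hw : w ∉ P)
    (hureal : ∃ v ∈ P, v ≠ u ∧ dist u v = minDist P)
    (himp : ∀ x ∈ P, x ≠ u → minDist P < dist w x) :
    potential p P < potential p (insert w (P.erase u)) := by
  set P' : Finset X := insert w (P.erase u) with hP'
  set κ := minDist P with hκdef
  set κ' := minDist P' with hκ'def
  obtain ⟨v, hv, hvu, hdv⟩ := hureal
  have huw : u ≠ w := fun h => hw (h ▸ hu)
  have hwE : w ∉ P.erase u := fun h => hw (Finset.mem_of_mem_erase h)
  have hcard' : P'.card = p + 1 := by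
    rw [hP', Finset.card_insert_of_notMem hwE, Finset.card_erase_of_mem hu, hcard]
    omega
  -- membership description of P'
  have hmemP' : ∀ x, x ∈ P' ↔ x = w ∨ (x ∈ P ∧ x ≠ u) := by
    intro x
    simp [hP', Finset.mem_erase, and_comm]
  -- κ ≤ κ'
  have hκκ' : κ ≤ κ' := by
    obtain ⟨a, ha, b, hb, hab, hd⟩ := minDist_mem (S := P') (by omega)
    rw [hκ'def, ← hd]
    rcases (hmemP' a).mp ha with rfl | ⟨haP, hau⟩
    · rcases (hmemP' b).mp hb with rfl | ⟨hbP, hbu⟩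
      · exact absurd rfl hab
      · exact le_of_lt (himp b hbP hbu)
    · rcases (hmemP' b).mp hb with rfl | ⟨hbP, hbu⟩
      · rw [dist_comm]; exact le_of_lt (himp a haP hau)
      · exact minDist_le haP hbP hab
  -- realizing sets
  have hRfin : {x : X | x ∈ P ∧ ∃ y ∈ P, y ≠ x ∧ dist x y = κ}.Finite :=
    P.finite_toSet.subset (fun x hx => hx.1)
  have huR : u ∈ {x : X | x ∈ P ∧ ∃ y ∈ P, y ≠ x ∧ dist x y = κ} :=
    ⟨hu, v, hv, hvu, hdv⟩
  rcases eq_or_lt_of_le hκκ' with heq | hlt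
  · -- κ' = κ : realizing set strictly shrinks
    have hsub : {x : X | x ∈ P' ∧ ∃ y ∈ P', y ≠ x ∧ dist x y = κ'} ⊂
        {x : X | x ∈ P ∧ ∃ y ∈ P, y ≠ x ∧ dist x y = κ} := by
      constructor
      · rintro x ⟨hx, y, hy, hyx, hd⟩
        rcases (hmemP' x).mp hx with rfl | ⟨hxP, hxu⟩
        · rcases (hmemP' y).mp hy with rfl | ⟨hyP, hyu⟩
          · exact absurd rfl hyx
          · exact absurd (hd ▸ heq ▸ himp y hyP hyu) (lt_irrefl _)
        · rcases (hmemP' y).mp hy with rfl | ⟨hyP, hyu⟩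
          · have := himp x hxP hxu
            rw [dist_comm] at hd
            exact absurd (hd ▸ heq ▸ this) (lt_irrefl _)
          · exact ⟨hxP, y, hyP, hyx, hd ▸ heq ▸ rfl⟩
      · intro hcon
        obtain ⟨hx, y, hy, hyx, hd⟩ := hcon huR
        rcases (hmemP' u).mp hx with rfl | ⟨_, hxu⟩
        · exact huw rfl
        · exact hxu rfl
    have hlt' : numRealizing P' < numRealizing P :=
      Set.ncard_lt_ncard hsub hRfin
    have hcast : (numRealizing P' : ℝ) < numRealizing P := by exact_mod_cast hlt'
    simp only [potential, ← hκdef, ← hκ'def, ← heq]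
    linarith
  · -- κ < κ' : since distances are integers, κ + 1 ≤ κ'
    obtain ⟨a, ha, b, hb, hab, hd⟩ := minDist_mem (S := P') (by omega)
    obtain ⟨n, hn⟩ := hint a b
    obtain ⟨m, hm⟩ := hint u v
    have hκm : κ = m := by rw [← hdv, hm]
    have hκ'n : κ' = n := by rw [hκ'def, ← hd, hn]
    have hmn : m < n := by
      have := hlt
      rw [hκm, hκ'n] at this
      exact_mod_cast this
    have hstep : κ + 1 ≤ κ' := by
      rw [hκm, hκ'n]
      have : (m : ℝ) + 1 ≤ n := by exact_mod_cast hmn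
      exact this
    -- η' ≤ p + 1
    have hη' : numRealizing P' ≤ p + 1 := by
      have : {x : X | x ∈ P' ∧ ∃ y ∈ P', y ≠ x ∧ dist x y = κ'}.ncard ≤ (↑P' : Set X).ncard :=
        Set.ncard_le_ncard (fun x hx => hx.1) P'.finite_toSet
      rwa [Set.ncard_coe_finset, hcard'] at this
    -- η ≥ 2
    have hη : 2 ≤ numRealizing P := by
      have hvR : v ∈ {x : X | x ∈ P ∧ ∃ y ∈ P, y ≠ x ∧ dist x y = κ} :=
        ⟨hv, u, hu, Ne.symm hvu, by rw [dist_comm]; exact hdv⟩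
      have hsub : ({u, v} : Set X) ⊆ {x : X | x ∈ P ∧ ∃ y ∈ P, y ≠ x ∧ dist x y = κ} := by
        rintro x (rfl | rfl) <;> assumption
      calc 2 = ({u, v} : Set X).ncard := (Set.ncard_pair (Ne.symm hvu)).symm
        _ ≤ _ := Set.ncard_le_ncard hsub hRfin
    have hc1 : (numRealizing P' : ℝ) ≤ p + 1 := by exact_mod_cast hη'
    have hc2 : (2 : ℝ) ≤ numRealizing P := by exact_mod_cast hη
    have hcp : (1 : ℝ) ≤ p := by exact_mod_cast hp
    have hmul : (p : ℝ) * (κ + 1) + p ≤ p * (κ' + 1) := by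
      have h0 : (0 : ℝ) ≤ p := by positivity
      nlinarith
    simp only [potential, ← hκdef, ← hκ'def]
    linarith
end

section
/- Let G be a δ-hyperbolic graph, S a finite vertex subset, u any vertex of S, and v₁ ∈ F_S(u), v₂ ∈ F_S(v₁). Then d(v₁, v₂) ≥ diam(S) − 2δ. -/
/-- Proposition 3 of Chepoi et al.: for a finite vertex set `S` of a δ-hyperbolic graph,
if `v₁` is a farthest vertex of `S` from `u ∈ S` and `v₂` a farthest vertex of `S` from
`v₁`, then `dist v₁ v₂ ≥ diam S − 2δ`. -/
theorem farthest_pair_almost_diametrical {X : Type*} [MetricSpace X] {δ : ℝ}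
    (hδ : 0 ≤ δ) (hgeo : GeodesicMS X) (hthin : ThinTriangles X δ)
    (S : Finset X)
    (hint : ∀ a ∈ S, ∀ b ∈ S, ∃ n : ℕ, dist a b = n)
    (u v₁ v₂ : X) (hu : u ∈ S) (hv1 : v₁ ∈ S) (hv2 : v₂ ∈ S)
    (hF1 : ∀ s ∈ S, dist u s ≤ dist u v₁)
    (hF2 : ∀ s ∈ S, dist v₁ s ≤ dist v₁ v₂) :
    ∀ a ∈ S, ∀ b ∈ S, dist a b ≤ dist v₁ v₂ + 2 * δ := by
  intro a ha b hb
  obtain ⟨f, hf⟩ := hgeo u a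
  obtain ⟨g, hg⟩ := hgeo u v₁
  obtain ⟨h, hh⟩ := hgeo u b
  obtain ⟨p, hp⟩ := hgeo a v₁
  obtain ⟨q, hq⟩ := hgeo v₁ b
  have h1 := (hthin u a v₁ f g p hf hg hp).1
  have h2 := (hthin u v₁ b g h q hg hh hq).1
  set t : ℝ := min ((dist u a + dist u v₁ - dist a v₁) / 2)
      ((dist u v₁ + dist u b - dist v₁ b) / 2) with htdef
  have d1 := dist_triangle a u v₁
  have d2 := dist_triangle v₁ u b
  have c1 : dist a u = dist u a := dist_comm a u
  have c2 : dist v₁ u = dist u v₁ := dist_comm v₁ u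
  have ht0 : 0 ≤ t := le_min (by linarith) (by linarith)
  have ht1 : t ≤ (dist u a + dist u v₁ - dist a v₁) / 2 := min_le_left _ _
  have ht2 : t ≤ (dist u v₁ + dist u b - dist v₁ b) / 2 := min_le_right _ _
  have hta : t ≤ dist u a := by
    have := dist_triangle u a v₁
    linarith
  have htb : t ≤ dist u b := by
    have h3 := dist_triangle u b v₁
    have h4 : dist b v₁ = dist v₁ b := dist_comm b v₁
    linarith
  have htv : t ≤ dist u v₁ := by
    have h3 := dist_triangle u v₁ a
    have h4 : dist v₁ a = dist a v₁ := dist_comm v₁ a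
    linarith
  have hfa : dist a (f t) = dist u a - t := by
    have := hf.2.2 (dist u a) ⟨dist_nonneg, le_refl _⟩ t ⟨ht0, hta⟩
    rw [hf.2.1] at this
    rw [this, abs_of_nonneg (by linarith)]
  have hhb : dist (h t) b = dist u b - t := by
    have := hh.2.2 t ⟨ht0, htb⟩ (dist u b) ⟨dist_nonneg, le_refl _⟩
    rw [hh.2.1] at this
    rw [this, abs_of_nonpos (by linarith)]
    ring
  have hfg : dist (f t) (g t) ≤ δ := h1 t ⟨ht0, ht1⟩
  have hgh : dist (g t) (h t) ≤ δ := h2 t ⟨ht0, ht2⟩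
  have key : dist a b ≤ (dist u a - t) + δ + δ + (dist u b - t) := by
    have A := dist_triangle4 a (f t) (h t) b
    have B := dist_triangle (f t) (g t) (h t)
    linarith
  have hFa := hF2 a ha
  have hFb := hF2 b hb
  have hF1a := hF1 a ha
  have hF1b := hF1 b hb
  have ca : dist v₁ a = dist a v₁ := dist_comm v₁ a
  rcases min_cases ((dist u a + dist u v₁ - dist a v₁) / 2)
      ((dist u v₁ + dist u b - dist v₁ b) / 2) with ⟨he, _⟩ | ⟨he, _⟩ <;>
    rw [htdef] at key <;> rw [he] at key <;> linarith
end
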